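/- arXiv:1904.10334 — 2 statements merged into one kernel-verified Lean document; each statement's English description precedes it below -/
import Mathlib

section
/- For all integers i, j and any polynomial g(s,t) ∈ ℂ[s,t], with D_i(g)(s,t) = λ^i·(s + iγ)·g(s−i, t) and F_j(g)(s,t) = −(λ^j/α)·(t/2 − β)(t/2 + β + 1)·g(s−j, t+2), one has (D_i ∘ F_j − F_j ∘ D_i)(g)(s,t) = j·(−λ^{i+j}/α)·(t/2 − β)(t/2 + β + 1)·g(s−i−j, t+2), i.e., [d_i, f_j] acts as j·f_{i+j}. -/
open MvPolynomial

abbrev R2 : Type := MvPolynomial (Fin 2) ℂ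

/-- Substitution `g(s,t) ↦ g(s - u, t + v)`. -/
noncomputable def sh (u v : ℂ) : R2 →ₐ[ℂ] R2 := aeval ![X 0 - C u, X 1 + C v]

/-- Action of `e_i` in `Ω(λ,α,β,γ)`. -/
noncomputable def omE (lam a : ℂ) (i : ℤ) (g : R2) : R2 :=
  C (lam ^ i * a) * sh (i : ℂ) (-2) g

/-- Action of `f_i` in `Ω(λ,α,β,γ)`. -/
noncomputable def omF (lam a b : ℂ) (i : ℤ) (g : R2) : R2 :=
  C (-(lam ^ i / a)) * (C 2⁻¹ * X 1 - C b) * (C 2⁻¹ * X 1 + C b + 1) * sh (i : ℂ) 2 g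

/-- Action of `h_i`. -/
noncomputable def opH (lam : ℂ) (i : ℤ) (g : R2) : R2 :=
  C (lam ^ i) * X 1 * sh (i : ℂ) 0 g

/-- Action of `d_i`. -/
noncomputable def opD (lam c : ℂ) (i : ℤ) (g : R2) : R2 :=
  C (lam ^ i) * (X 0 + C ((i : ℂ) * c)) * sh (i : ℂ) 0 g

/-!
`d_i` only shifts `s`, so it commutes past the `t`-dependent prefactor of `f_j`; `f_j` shifts
`s` by `j`, so it turns the factor `s + iγ` of `d_i` into `s - j + iγ`. The two composites thus
differ only in that factor, by `j`, and the shifts and powers of `λ` combine to those of `f_{i+j}`.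
-/

@[simp]
lemma sh_X_zero (u v : ℂ) : sh u v (X 0) = X 0 - C u := by simp [sh]

@[simp]
lemma sh_X_one (u v : ℂ) : sh u v (X 1) = X 1 + C v := by simp [sh]

@[simp]
lemma sh_C (u v k : ℂ) : sh u v (C k) = C k := by simp [sh]

lemma sh_comp_sh (u v u' v' : ℂ) : (sh u v).comp (sh u' v') = sh (u + u') (v + v') := by
  apply algHom_ext
  intro n
  fin_cases n <;> simp [map_add, map_sub] <;> ring

lemma sh_sh (u v u' v' : ℂ) (g : R2) : sh u v (sh u' v' g) = sh (u + u') (v + v') g :=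
  DFunLike.congr_fun (sh_comp_sh u v u' v') g

lemma opD_omF (lam a b c : ℂ) (i j : ℤ) (g : R2) :
    opD lam c i (omF lam a b j g) =
      C (lam ^ i * -(lam ^ j / a)) * (X 0 + C ((i : ℂ) * c)) *
        ((C 2⁻¹ * X 1 - C b) * (C 2⁻¹ * X 1 + C b + 1)) * sh ((i : ℂ) + j) 2 g := by
  simp only [opD, omF, map_mul, map_add, map_sub, map_one, sh_C, sh_X_one, sh_sh, C_0, add_zero,
    zero_add]
  ring

lemma omF_opD (lam a b c : ℂ) (i j : ℤ) (g : R2) :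
    omF lam a b j (opD lam c i g) =
      C (lam ^ i * -(lam ^ j / a)) * (X 0 - C (j : ℂ) + C ((i : ℂ) * c)) *
        ((C 2⁻¹ * X 1 - C b) * (C 2⁻¹ * X 1 + C b + 1)) * sh ((i : ℂ) + j) 2 g := by
  simp only [opD, omF, map_mul, map_add, sh_C, sh_X_zero, sh_sh, add_zero]
  rw [add_comm (j : ℂ)]
  ring

theorem stmt2_general (lam a : ℂ) (hlam : lam ≠ 0) (b c : ℂ) (i j : ℤ)
    (g : R2) :
    opD lam c i (omF lam a b j g) - omF lam a b j (opD lam c i g)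
      = (j : ℂ) • omF lam a b (i + j) g := by
  rw [opD_omF, omF_opD, omF, smul_eq_C_mul, zpow_add₀ hlam, Int.cast_add]
  simp only [C_mul, C_neg, div_eq_mul_inv]
  ring

theorem stmt2 (lam a : ℂ) (hlam : lam ≠ 0) (ha : a ≠ 0) (b c : ℂ) (i j : ℤ)
    (g : R2) :
    opD lam c i (omF lam a b j g) - omF lam a b j (opD lam c i g)
      = (j : ℂ) • omF lam a b (i + j) g :=
  stmt2_general lam a hlam b c i j g
end

section
/- For λ, λ', α, α' ∈ ℂ \ {0} and β, β', γ, γ' ∈ ℂ, the 𝔏-modules Ω(λ, α, β, γ) and Ω(λ', α', β', γ') are isomorphic if and only if (λ, α, γ) = (λ', α', γ') and (β = β' or β = −β' − 1). -/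
open MvPolynomial

/-
Taking `i = 0`, the operators `h_0` and `d_0` act on `ℂ[s,t]` as multiplication by `t` and `s`.
A module isomorphism commutes with them, hence with multiplication by every polynomial, so it is
multiplication by the unit `φ 1`, i.e. by a nonzero constant. Such a map intertwines two of the
operators `e_i, f_i, h_i, d_i` only if they coincide, and reading off `h_1`, `e_0`, `d_1`, `f_0`
on the constant `1` recovers `λ`, `α`, `γ` and `β(β + 1)`; the last is invariant exactly under
`β ↦ β` and `β ↦ -β - 1`.
-/

namespace MvPolynomial

theorem linearMap_apply_eq_mul_map_one {σ R : Type*} [CommSemiring R]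
    (φ : MvPolynomial σ R →ₗ[R] MvPolynomial σ R) (hX : ∀ i g, φ (X i * g) = X i * φ g)
    (p : MvPolynomial σ R) : φ p = p * φ 1 := by
  suffices h : ∀ g, φ (p * g) = p * φ g by simpa using h 1
  induction p using MvPolynomial.induction_on with
  | C r => intro g; rw [← smul_eq_C_mul, ← smul_eq_C_mul, map_smul]
  | add p q hp hq => intro g; rw [add_mul, map_add, hp, hq, add_mul]
  | mul_X p i hp => intro g; rw [mul_assoc, hp, hX, ← mul_assoc]

theorem exists_linearEquiv_eq_C_mul {σ K : Type*} [Field K]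
    (φ : MvPolynomial σ K ≃ₗ[K] MvPolynomial σ K) (hX : ∀ i g, φ (X i * g) = X i * φ g) :
    ∃ κ : K, κ ≠ 0 ∧ ∀ p, φ p = C κ * p := by
  have hφ : ∀ p, φ p = p * φ 1 := linearMap_apply_eq_mul_map_one φ.toLinearMap hX
  obtain ⟨q, hq⟩ := φ.surjective 1
  have hunit : IsUnit (φ 1) := .of_mul_eq_one_right q (by rw [← hφ q]; exact hq)
  obtain ⟨κ, hκ, hκ1⟩ := isUnit_iff_eq_C_of_isReduced.1 hunit
  exact ⟨κ, hκ.ne_zero, fun p => by rw [hφ p, hκ1, mul_comm]⟩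

theorem eq_of_C_mul_intertwines {σ K ι : Type*} [Field K] {κ : K} (hκ : κ ≠ 0)
    {φ : MvPolynomial σ K → MvPolynomial σ K} (hφ : ∀ p, φ p = C κ * p)
    {T T' : ι → MvPolynomial σ K → MvPolynomial σ K}
    (hT' : ∀ i g, T' i (C κ * g) = C κ * T' i g) (h : ∀ i g, φ (T i g) = T' i (φ g)) :
    T = T' := by
  funext i g
  have hκ' : (C κ : MvPolynomial σ K) ≠ 0 := C_ne_zero.2 hκ
  exact mul_left_cancel₀ hκ' (by rw [← hφ, h, hφ, hT'])

end MvPolynomial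

theorem sh_zero_zero : sh 0 0 = AlgHom.id ℂ R2 := by
  rw [sh, ← aeval_X_left]
  congr 1
  funext i
  fin_cases i <;> simp

theorem sh_C_mul (u v κ : ℂ) (g : R2) : sh u v (C κ * g) = C κ * sh u v g := by
  rw [map_mul, sh, aeval_C, algebraMap_eq]

theorem omE_C_mul (lam a κ : ℂ) (i : ℤ) (g : R2) :
    omE lam a i (C κ * g) = C κ * omE lam a i g := by
  simp only [omE, sh_C_mul]; ring

theorem omF_C_mul (lam a b κ : ℂ) (i : ℤ) (g : R2) :
    omF lam a b i (C κ * g) = C κ * omF lam a b i g := by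
  simp only [omF, sh_C_mul]; ring

theorem opH_C_mul (lam κ : ℂ) (i : ℤ) (g : R2) :
    opH lam i (C κ * g) = C κ * opH lam i g := by
  simp only [opH, sh_C_mul]; ring

theorem opD_C_mul (lam c κ : ℂ) (i : ℤ) (g : R2) :
    opD lam c i (C κ * g) = C κ * opD lam c i g := by
  simp only [opD, sh_C_mul]; ring

theorem opH_zero (lam : ℂ) (g : R2) : opH lam 0 g = X 1 * g := by
  simp [opH, sh_zero_zero]

theorem opD_zero (lam c : ℂ) (g : R2) : opD lam c 0 g = X 0 * g := by
  simp [opD, sh_zero_zero]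

theorem opH_injective : Function.Injective opH := by
  intro lam lam' h
  simpa [opH] using congrArg (eval 1) (congrFun (congrFun h 1) 1)

theorem omE_injective (lam : ℂ) : Function.Injective (omE lam) := by
  intro a a' h
  simpa [omE] using congrArg (eval 0) (congrFun (congrFun h 0) 1)

theorem opD_injective {lam : ℂ} (hlam : lam ≠ 0) : Function.Injective (opD lam) := by
  intro c c' h
  simpa [opD, hlam] using congrArg (eval 0) (congrFun (congrFun h 1) 1)

theorem omF_eq_omF_iff (lam : ℂ) {a : ℂ} (ha : a ≠ 0) (b b' : ℂ) :
    omF lam a b = omF lam a b' ↔ b = b' ∨ b = -b' - 1 := by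
  constructor
  · intro h
    have h0 := congrArg (eval 0) (congrFun (congrFun h 0) 1)
    simp only [omF, zpow_zero, map_one, mul_one, eval_mul, eval_add, eval_sub, eval_C, eval_X,
      Pi.zero_apply, mul_zero, zero_sub, zero_add] at h0
    have hfactor : (b - b') * (b + b' + 1) = 0 := by
      field_simp at h0
      linear_combination h0
    rcases mul_eq_zero.1 hfactor with h | h
    · exact .inl (sub_eq_zero.1 h)
    · exact .inr (by linear_combination h)
  · rintro (rfl | rfl)
    · rfl
    · funext i g
      simp only [omF, map_sub, map_neg, map_one]
      ring

theorem stmt12_general (lam lam' a a' : ℂ) (hlam : lam ≠ 0)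
    (ha : a ≠ 0) (b b' c c' : ℂ) :
    (∃ φ : R2 ≃ₗ[ℂ] R2,
      (∀ (i : ℤ) (g : R2), φ (omE lam a i g) = omE lam' a' i (φ g)) ∧
      (∀ (i : ℤ) (g : R2), φ (omF lam a b i g) = omF lam' a' b' i (φ g)) ∧
      (∀ (i : ℤ) (g : R2), φ (opH lam i g) = opH lam' i (φ g)) ∧
      (∀ (i : ℤ) (g : R2), φ (opD lam c i g) = opD lam' c' i (φ g)))
    ↔ (lam = lam' ∧ a = a' ∧ c = c' ∧ (b = b' ∨ b = -b' - 1)) := by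
  constructor
  · rintro ⟨φ, hE, hF, hH, hD⟩
    have hX : ∀ i g, φ (X i * g) = X i * φ g := by
      intro i g
      fin_cases i
      · simpa [opD_zero] using hD 0 g
      · simpa [opH_zero] using hH 0 g
    obtain ⟨κ, hκ, hφ⟩ := exists_linearEquiv_eq_C_mul φ hX
    obtain rfl : lam = lam' :=
      opH_injective (eq_of_C_mul_intertwines hκ hφ (opH_C_mul lam' κ) hH)
    obtain rfl : a = a' :=
      omE_injective lam (eq_of_C_mul_intertwines hκ hφ (omE_C_mul lam a' κ) hE)
    refine ⟨rfl, rfl,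
      opD_injective hlam (eq_of_C_mul_intertwines hκ hφ (opD_C_mul lam c' κ) hD),
      (omF_eq_omF_iff lam ha b b').1 (eq_of_C_mul_intertwines hκ hφ (omF_C_mul lam a b' κ) hF)⟩
  · rintro ⟨rfl, rfl, rfl, hb⟩
    rw [← omF_eq_omF_iff lam ha] at hb
    exact ⟨LinearEquiv.refl ℂ R2, fun _ _ => rfl, fun _ _ => by rw [hb]; rfl,
      fun _ _ => rfl, fun _ _ => rfl⟩

/-- Ω(λ,α,β,γ) ≅ Ω(λ',α',β',γ') iff (λ,α,γ) = (λ',α',γ') and β = β' or β = −β'−1. -/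
theorem stmt12 (lam lam' a a' : ℂ) (hlam : lam ≠ 0) (hlam' : lam' ≠ 0)
    (ha : a ≠ 0) (ha' : a' ≠ 0) (b b' c c' : ℂ) :
    (∃ φ : R2 ≃ₗ[ℂ] R2,
      (∀ (i : ℤ) (g : R2), φ (omE lam a i g) = omE lam' a' i (φ g)) ∧
      (∀ (i : ℤ) (g : R2), φ (omF lam a b i g) = omF lam' a' b' i (φ g)) ∧
      (∀ (i : ℤ) (g : R2), φ (opH lam i g) = opH lam' i (φ g)) ∧
      (∀ (i : ℤ) (g : R2), φ (opD lam c i g) = opD lam' c' i (φ g)))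
    ↔ (lam = lam' ∧ a = a' ∧ c = c' ∧ (b = b' ∨ b = -b' - 1)) :=
  stmt12_general lam lam' a a' hlam ha b b' c c'
end
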